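/- arXiv:0804.0882 — 2 statements merged into one kernel-verified Lean document; each statement's English description precedes it below -/
import Mathlib

section
/- For a Grassmann necklace (I_1,...,I_n) with associated decorated permutation (π, col) and any r ∈ [n], the formula I_r = { i ∈ [n] : i <_r π⁻¹(i), or (π(i) = i and col(i) = -1) } holds, where <_r is the linear order r <_r r+1 <_r ... <_r r-1. -/
open Finset

/-- Position of `a` in the cyclic (linear) order starting at `t` on `Fin n`. -/
def cval {n : ℕ} (t a : Fin n) : ℕ := ((a - t : Fin n) : ℕ)

/-- Gale order on finsets of `Fin n` induced by the linear order with key `f`: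
compare the sorted lists of keys coordinatewise. -/
def galeLEKey {n : ℕ} (f : Fin n → ℕ) (A B : Finset (Fin n)) : Prop :=
  List.Forall₂ (· ≤ ·) ((A.image f).sort (· ≤ ·)) ((B.image f).sort (· ≤ ·))

/-- Gale order `≤_t` induced by the cyclic order starting at `t`. -/
def galeLE {n : ℕ} (t : Fin n) (A B : Finset (Fin n)) : Prop :=
  galeLEKey (cval t) A B

/-- The set of maximal elements of `D` w.r.t. `≤_a` (a singleton when `D` is nonempty). -/
def cmax {n : ℕ} (a : Fin n) (D : Finset (Fin n)) : Finset (Fin n) :=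
  D.filter (fun x => ∀ y ∈ D, cval a y ≤ cval a x)

/-- The set of minimal elements of `D` w.r.t. `≤_a` (a singleton when `D` is nonempty). -/
def cmin {n : ℕ} (a : Fin n) (D : Finset (Fin n)) : Finset (Fin n) :=
  D.filter (fun x => ∀ y ∈ D, cval a x ≤ cval a y)

/-- A Grassmann necklace on `[n]`. -/
def IsGrassmannNecklace {n : ℕ} [NeZero n] (I : Fin n → Finset (Fin n)) : Prop :=
  ∀ i : Fin n,
    (i ∈ I i → ∃ j : Fin n, I (i + 1) = insert j (I i \ {i})) ∧
    (i ∉ I i → I (i + 1) = I i)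

/-- A decorated permutation: a permutation with fixed points colored by `1` or `-1`
(non-fixed points carry the dummy color `1`). -/
structure DecoratedPerm (n : ℕ) where
  π : Equiv.Perm (Fin n)
  col : Fin n → ℤ
  col_fixed : ∀ i, π i = i → col i = 1 ∨ col i = -1
  col_nonfixed : ∀ i, π i ≠ i → col i = 1

/-- The Grassmann necklace associated to a decorated permutation:
`I_r = { i : i <_r π⁻¹(i), or π(i) = i and col(i) = -1 }`. -/
def necklaceOf {n : ℕ} (P : DecoratedPerm n) : Fin n → Finset (Fin n) :=
  fun r => Finset.univ.filter
    (fun i => cval r i < cval r (P.π.symm i) ∨ (P.π i = i ∧ P.col i = -1))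

/-- The forward map from Grassmann necklaces to decorated permutations:
`P` corresponds to the necklace `I`. -/
def Corresponds {n : ℕ} [NeZero n] (I : Fin n → Finset (Fin n)) (P : DecoratedPerm n) : Prop :=
  ∀ i : Fin n,
    ((I (i + 1) = I i ∧ i ∉ I i) → (P.π i = i ∧ P.col i = 1)) ∧
    ((I (i + 1) = I i ∧ i ∈ I i) → (P.π i = i ∧ P.col i = -1)) ∧
    (∀ j : Fin n, j ≠ i → i ∈ I i → I (i + 1) = insert j (I i \ {i}) → P.π i = j)

/-- `phiSet I j a` is `{j}` if `j ∈ I_a`, and otherwise `{max_a (I_a \ I_j)}`. -/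
def phiSet {n : ℕ} (I : Fin n → Finset (Fin n)) (j a : Fin n) : Finset (Fin n) :=
  if j ∈ I a then {j} else cmax a (I a \ I j)

/-- One pass of the contraction algorithm (fuel-indexed; the loop walks `a ← a+1`). -/
def contractLoop {n : ℕ} [NeZero n] (π : Equiv.Perm (Fin n)) (j : Fin n) :
    ℕ → (Fin n → Fin n) → (Fin n → ℤ) → Fin n → Fin n →
      (Fin n → Fin n) × (Fin n → ℤ)
  | 0, μ, c, q, a => (Function.update μ a q, c)
  | fuel + 1, μ, c, q, a =>
    if π a = j then (Function.update μ a q, c)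
    else if q = a ∨ (cval (a + 1) q < cval (a + 1) (π a) ∧
                      cval (a + 1) (π a) < cval (a + 1) j) then
      contractLoop π j fuel (Function.update μ a q)
        (if q = a then Function.update c a 1 else c) (π a) (a + 1)
    else
      contractLoop π j fuel μ c q (a + 1)

/-- The contraction algorithm: output `(μ, col')` from `(π, col)` and `j`. -/
def contractAlg {n : ℕ} [NeZero n] (π : Equiv.Perm (Fin n)) (col : Fin n → ℤ) (j : Fin n) :
    (Fin n → Fin n) × (Fin n → ℤ) :=
  contractLoop π j n (Function.update (⇑π) j j) (Function.update col j 1) (π j) (j + 1)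

/-- One pass of the restriction algorithm (the loop walks `a ← a-1`). -/
def restrictLoop {n : ℕ} [NeZero n] (π : Equiv.Perm (Fin n)) (j : Fin n) :
    ℕ → (Fin n → Fin n) → (Fin n → ℤ) → Fin n → Fin n →
      (Fin n → Fin n) × (Fin n → ℤ)
  | 0, μ, c, q, a => (Function.update μ a q, c)
  | fuel + 1, μ, c, q, a =>
    if π a = j then (Function.update μ a q, c)
    else if q = a ∨ (cval a j < cval a (π a) ∧ cval a (π a) < cval a q) then
      restrictLoop π j fuel (Function.update μ a q)
        (if q = a then Function.update c a 1 else c) (π a) (a - 1)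
    else
      restrictLoop π j fuel μ c q (a - 1)

/-- The restriction algorithm: output `(μ, col')` from `(π, col)` and `j`. -/
def restrictAlg {n : ℕ} [NeZero n] (π : Equiv.Perm (Fin n)) (col : Fin n → ℤ) (j : Fin n) :
    (Fin n → Fin n) × (Fin n → ℤ) :=
  restrictLoop π j n (Function.update (⇑π) j j) (Function.update col j 1) (π j) (j - 1)

/-!
As `r` runs once around the cycle, membership of a fixed `x` in `I_r` changes at most twice:
passing `r = x` removes `x` (unless `x` is a fixed point coloured `-1`, when it stays), and
passing `r = π⁻¹(x)` inserts it; at every other step it is unchanged. The sets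
`necklaceOf P r` obey exactly the same local rules and agree with `I_r` on `x` at `r = x`, so
the two agree for every `r` by induction around the cycle.
-/

open Fin.NatCast Fin.CommRing

section

variable {n : ℕ} [NeZero n]

theorem Fin.induction_add_one {p : Fin n → Prop} (s : Fin n) (hs : p s)
    (h : ∀ a, p a → p (a + 1)) (r : Fin n) : p r := by
  have hk : ∀ k : ℕ, p (s + k) := by
    intro k
    induction k with
    | zero => simpa using hs
    | succ k ih => simpa [← add_assoc] using h _ ih
  simpa [cval] using hk (cval s r)

omit [NeZero n] in
theorem cval_lt (t a : Fin n) : cval t a < n := (a - t).isLt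

theorem cval_eq_zero_iff {t a : Fin n} : cval t a = 0 ↔ a = t := by
  rw [cval, Fin.val_eq_zero_iff, sub_eq_zero]

theorem cval_add_one_self (a : Fin n) : cval (a + 1) a = n - 1 := by
  obtain ⟨m, rfl⟩ := Nat.exists_eq_succ_of_ne_zero (NeZero.ne n)
  rw [cval, sub_add_cancel_left, Fin.coe_neg_one]
  rfl

theorem cval_add_one_add_one {a y : Fin n} (h : y ≠ a) : cval (a + 1) y + 1 = cval a y := by
  obtain ⟨m, rfl⟩ := Nat.exists_eq_succ_of_ne_zero (NeZero.ne n)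
  have hlast : y - (a + 1) ≠ Fin.last m := fun heq => h <| by
    rw [← sub_eq_zero, show y - a = y - (a + 1) + 1 by ring, heq, Fin.last_add_one]
  rw [cval, cval, ← Fin.val_add_one_of_lt (lt_of_le_of_ne (Fin.le_last _) hlast),
    sub_add_eq_sub_sub, sub_add_cancel]

namespace DecoratedPerm

variable (P : DecoratedPerm n)

omit [NeZero n] in
theorem mem_necklaceOf {r i : Fin n} :
    i ∈ necklaceOf P r ↔ cval r i < cval r (P.π.symm i) ∨ (P.π i = i ∧ P.col i = -1) := by
  simp [necklaceOf]

theorem mem_necklaceOf_self (x : Fin n) :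
    x ∈ necklaceOf P x ↔ P.π x ≠ x ∨ P.col x = -1 := by
  have hpos : 0 < cval x (P.π.symm x) ↔ P.π x ≠ x := by
    rw [Nat.pos_iff_ne_zero, Ne, cval_eq_zero_iff, Equiv.symm_apply_eq, eq_comm]
  rw [mem_necklaceOf, (cval_eq_zero_iff.mpr rfl : cval x x = 0), hpos]
  tauto

theorem mem_necklaceOf_add_one_self (x : Fin n) :
    x ∈ necklaceOf P (x + 1) ↔ P.π x = x ∧ P.col x = -1 := by
  have := cval_lt (x + 1) (P.π.symm x)
  rw [mem_necklaceOf, cval_add_one_self]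
  omega

theorem apply_mem_necklaceOf_add_one {a : Fin n} (h : P.π a ≠ a) :
    P.π a ∈ necklaceOf P (a + 1) := by
  have := cval_add_one_add_one h
  have := cval_lt a (P.π a)
  rw [mem_necklaceOf, Equiv.symm_apply_apply, cval_add_one_self]
  omega

theorem mem_necklaceOf_add_one_iff_of_ne {a x : Fin n} (hxa : x ≠ a) (hpx : P.π a ≠ x) :
    x ∈ necklaceOf P (a + 1) ↔ x ∈ necklaceOf P a := by
  have hb : P.π.symm x ≠ a := fun h => hpx (by rw [← h, Equiv.apply_symm_apply])
  have := cval_add_one_add_one hxa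
  have := cval_add_one_add_one hb
  rw [mem_necklaceOf, mem_necklaceOf]
  omega

end DecoratedPerm

namespace Corresponds

variable {I : Fin n → Finset (Fin n)} {P : DecoratedPerm n}

theorem fixed_of_notMem (hC : Corresponds I P) (hI : IsGrassmannNecklace I) {a : Fin n}
    (ha : a ∉ I a) : P.π a = a ∧ P.col a = 1 :=
  (hC a).1 ⟨(hI a).2 ha, ha⟩

theorem mem_self_of_apply_ne (hC : Corresponds I P) (hI : IsGrassmannNecklace I) {a : Fin n}
    (h : P.π a ≠ a) : a ∈ I a :=
  by_contra fun ha => h (hC.fixed_of_notMem hI ha).1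

theorem add_one_eq_insert (hC : Corresponds I P) (hI : IsGrassmannNecklace I) {a : Fin n}
    (ha : a ∈ I a) : I (a + 1) = insert (P.π a) (I a \ {a}) := by
  obtain ⟨j, hj⟩ := (hI a).1 ha
  by_cases hja : j = a
  · subst hja
    have hstay : I (j + 1) = I j := by rw [hj, sdiff_singleton_eq_erase, insert_erase ha]
    rw [((hC j).2.1 ⟨hstay, ha⟩).1, hj]
  · rwa [(hC a).2.2 j hja ha hj]

theorem mem_self_iff (hC : Corresponds I P) (hI : IsGrassmannNecklace I) (a : Fin n) :
    a ∈ I a ↔ P.π a ≠ a ∨ P.col a = -1 := by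
  constructor
  · intro ha
    refine or_iff_not_imp_left.mpr fun hfix => ((hC a).2.1 ⟨?_, ha⟩).2
    rw [hC.add_one_eq_insert hI ha, not_not.mp hfix, sdiff_singleton_eq_erase, insert_erase ha]
  · rintro (h | hcol)
    · exact hC.mem_self_of_apply_ne hI h
    · by_contra ha
      have := (hC.fixed_of_notMem hI ha).2
      omega

theorem mem_add_one_self_iff (hC : Corresponds I P) (hI : IsGrassmannNecklace I) (a : Fin n) :
    a ∈ I (a + 1) ↔ P.π a = a ∧ P.col a = -1 := by
  by_cases ha : a ∈ I a
  · have hcol := hC.mem_self_iff hI a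
    rw [hC.add_one_eq_insert hI ha]
    simp only [mem_insert, mem_sdiff, mem_singleton, not_true, and_false, or_false]
    tauto
  · have hfix := hC.fixed_of_notMem hI ha
    rw [(hI a).2 ha]
    simp only [ha, hfix.2, false_iff]
    omega

theorem apply_mem_add_one (hC : Corresponds I P) (hI : IsGrassmannNecklace I) {a : Fin n}
    (h : P.π a ≠ a) : P.π a ∈ I (a + 1) := by
  rw [hC.add_one_eq_insert hI (hC.mem_self_of_apply_ne hI h)]
  exact mem_insert_self _ _

theorem mem_add_one_iff_of_ne (hC : Corresponds I P) (hI : IsGrassmannNecklace I)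
    {a x : Fin n} (hxa : x ≠ a) (hpx : P.π a ≠ x) : x ∈ I (a + 1) ↔ x ∈ I a := by
  by_cases ha : a ∈ I a
  · rw [hC.add_one_eq_insert hI ha]
    simp [hxa, Ne.symm hpx]
  · rw [(hI a).2 ha]

end Corresponds

end

/-- for a Grassmann necklace `I` with associated decorated permutation
`(π, col)`, the formula `I_r = { i : i <_r π⁻¹(i) or (π(i) = i and col(i) = -1) }` holds. -/
theorem necklace_formula (n : ℕ) [NeZero n] (I : Fin n → Finset (Fin n))
    (P : DecoratedPerm n) (hI : IsGrassmannNecklace I) (hC : Corresponds I P) :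
    ∀ r : Fin n, I r = necklaceOf P r := by
  suffices ∀ x r, x ∈ I r ↔ x ∈ necklaceOf P r from fun r => Finset.ext (this · r)
  intro x
  refine Fin.induction_add_one x ?_ fun a ih => ?_
  · rw [hC.mem_self_iff hI, P.mem_necklaceOf_self]
  · by_cases hxa : x = a
    · subst hxa
      rw [hC.mem_add_one_self_iff hI, P.mem_necklaceOf_add_one_self]
    by_cases hpx : P.π a = x
    · have hfix : P.π a ≠ a := hpx ▸ hxa
      subst hpx
      exact iff_of_true (hC.apply_mem_add_one hI hfix) (P.apply_mem_necklaceOf_add_one hfix)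
    · rw [hC.mem_add_one_iff_of_ne hI hxa hpx, P.mem_necklaceOf_add_one_iff_of_ne hxa hpx, ih]
end

section
/- Let (I_1,...,I_n) be a Grassmann necklace and M = { H ∈ binom([n], k) : H ≥_t I_t for all t ∈ [n] } the associated positroid. Then for each t, I_t ∈ M and I_t is the unique ≤_t-minimal element of M. -/
/-! Write `≤_s` for the cyclic order starting at `s`. An element `a` of `I_r` can leave the
necklace only at step `r = a`, so walking from `t` to `s` the elements of `I_t` lying before
`t` survive into `I_s`, and walking from `s` to `t` the elements of `I_s` lying after `t`
survive into `I_t`. Counting elements in initial segments of `≤_s` (directly for segments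
ending before `t`, via complements and `|I_s| = |I_t|` otherwise) then gives `I_s ≤_s I_t`
for all `s, t`, so every `I_t` lies in the positroid and is below every member of it in `≤_t`;
uniqueness is antisymmetry of the Gale order. -/

open Finset

section Gale

variable {n : ℕ}

theorem List.Pairwise.getElem_le_iff_lt_countP {L : List ℕ} (hL : L.Pairwise (· ≤ ·)) (m : ℕ)
    {i : ℕ} (hi : i < L.length) : L[i] ≤ m ↔ i < L.countP (· ≤ m) := by
  induction L generalizing i with
  | nil => simp at hi
  | cons a L ih =>
    rw [List.pairwise_cons] at hL
    by_cases ham : a ≤ m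
    · rw [List.countP_cons_of_pos (by simpa using ham)]
      cases i with
      | zero => simpa using ham
      | succ i =>
        rw [List.getElem_cons_succ, ih hL.2 (by simpa using hi)]
        omega
    · have hnone : L.countP (· ≤ m) = 0 :=
        List.countP_eq_zero.mpr fun x hx hxm => ham ((hL.1 x hx).trans (by simpa using hxm))
      rw [List.countP_cons_of_neg (by simpa using ham), hnone]
      cases i with
      | zero => simpa using ham
      | succ i =>
        simp only [List.getElem_cons_succ, Nat.not_lt_zero, iff_false, not_le]
        exact lt_of_lt_of_le (not_le.mp ham) (hL.1 _ (List.getElem_mem _))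

theorem countP_sort_image_eq_card_filter {f : Fin n → ℕ} (hf : Function.Injective f)
    (A : Finset (Fin n)) (m : ℕ) :
    ((A.image f).sort (· ≤ ·)).countP (· ≤ m) = (A.filter (f · ≤ m)).card := by
  rw [← Multiset.coe_countP, Finset.sort_eq, Multiset.countP_eq_card_filter, ← Finset.filter_val,
    ← Finset.card_def, Finset.filter_image, Finset.card_image_of_injective _ hf]

theorem galeLEKey_of_card_filter_le {f : Fin n → ℕ} (hf : Function.Injective f)
    {A B : Finset (Fin n)} (hcard : A.card = B.card)
    (hcount : ∀ m, (B.filter (f · ≤ m)).card ≤ (A.filter (f · ≤ m)).card) :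
    galeLEKey f A B := by
  rw [galeLEKey, List.forall₂_iff_get]
  refine ⟨by simp [Finset.card_image_of_injective _ hf, hcard], fun i hA hB => ?_⟩
  by_contra! hlt
  have hB' := ((Finset.pairwise_sort _ _).getElem_le_iff_lt_countP _ hB).mp le_rfl
  have hA' := ((Finset.pairwise_sort _ _).getElem_le_iff_lt_countP _ hA).not.mp (not_le.mpr hlt)
  rw [countP_sort_image_eq_card_filter hf] at hA' hB'
  exact hA' (hB'.trans_le (hcount _))

theorem galeLEKey_antisymm {f : Fin n → ℕ} (hf : Function.Injective f) {A B : Finset (Fin n)}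
    (hAB : galeLEKey f A B) (hBA : galeLEKey f B A) : A = B := by
  rw [galeLEKey, List.forall₂_iff_get] at hAB hBA
  have hsort : (A.image f).sort (· ≤ ·) = (B.image f).sort (· ≤ ·) :=
    List.ext_get hAB.1 fun i hA hB => le_antisymm (hAB.2 i hA hB) (hBA.2 i hB hA)
  apply Finset.image_injective hf
  rw [← Finset.sort_toFinset (A.image f) (· ≤ ·), hsort, Finset.sort_toFinset]

end Gale

section Cyclic

open Fin.NatCast

variable {n : ℕ} [NeZero n]

theorem cval_injective (t : Fin n) : Function.Injective (cval t) := fun a b h => by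
  simpa using congrArg (· + t) (Fin.val_injective h : a - t = b - t)

theorem cval_add_natCast (t : Fin n) {d : ℕ} (hd : d < n) : cval t (t + (d : Fin n)) = d := by
  simp [cval, Fin.val_cast_of_lt hd]

theorem add_natCast_cval (t a : Fin n) : t + (cval t a : Fin n) = a := by
  simp [cval]

/-- Going from `t` to `a` through `i` wraps around once, so `cval t a = n + cval i a - cval i t`
while `cval t i = n - cval i t`. -/
theorem cval_le_cval_of_cval_lt {i t a : Fin n} (h : cval i a < cval i t) :
    cval t i ≤ cval t a := by
  have hta : a - t = (a - i) - (t - i) := by abel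
  have hti : i - t = 0 - (t - i) := by abel
  have hpos : (0 : Fin n) < t - i := Fin.pos_iff_ne_zero.mpr fun h0 => by simp [cval, h0] at h
  unfold cval at h ⊢
  rw [hta, hti, Fin.coe_sub_iff_lt.mpr h, Fin.coe_sub_iff_lt.mpr hpos, Fin.val_zero]
  omega

end Cyclic

namespace IsGrassmannNecklace

open Fin.NatCast

variable {n : ℕ} [NeZero n] {I : Fin n → Finset (Fin n)}

theorem mem_succ (hI : IsGrassmannNecklace I) {r a : Fin n} (ha : a ∈ I r) (hne : a ≠ r) :
    a ∈ I (r + 1) := by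
  by_cases hr : r ∈ I r
  · obtain ⟨j, hj⟩ := (hI r).1 hr
    rw [hj]
    exact Finset.mem_insert_of_mem (by simp [ha, hne])
  · rwa [(hI r).2 hr]

theorem mem_add_natCast (hI : IsGrassmannNecklace I) {r a : Fin n} (ha : a ∈ I r) :
    ∀ p : ℕ, (∀ q < p, r + (q : Fin n) ≠ a) → a ∈ I (r + (p : Fin n))
  | 0, _ => by simpa using ha
  | p + 1, hp => by
    have hmem := hI.mem_add_natCast ha p fun q hq => hp q (Nat.lt_succ_of_lt hq)
    rw [Nat.cast_succ, ← add_assoc]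
    exact hI.mem_succ hmem fun h => hp p (Nat.lt_succ_self p) h.symm

theorem mem_of_cval_le (hI : IsGrassmannNecklace I) {r r' a : Fin n}
    (h : cval r r' ≤ cval r a) (ha : a ∈ I r) : a ∈ I r' := by
  rw [← add_natCast_cval r r']
  refine hI.mem_add_natCast ha _ fun q hq hqa => ?_
  have : cval r a = q := by rw [← hqa, cval_add_natCast r (hq.trans_le h |>.trans (a - r).isLt)]
  omega

theorem galeLE_of_card_eq (hI : IsGrassmannNecklace I) {s t : Fin n}
    (hcard : (I s).card = (I t).card) : galeLE s (I s) (I t) := by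
  refine galeLEKey_of_card_filter_le (cval_injective s) hcard fun m => ?_
  rcases lt_or_ge m (cval s t) with hm | hm
  · refine Finset.card_le_card fun a ha => ?_
    rw [Finset.mem_filter] at ha ⊢
    exact ⟨hI.mem_of_cval_le (cval_le_cval_of_cval_lt (by omega)) ha.1, ha.2⟩
  · have hlate : (I s).filter (¬ cval s · ≤ m) ⊆ (I t).filter (¬ cval s · ≤ m) := fun a ha => by
      rw [Finset.mem_filter] at ha ⊢
      exact ⟨hI.mem_of_cval_le (by omega) ha.1, ha.2⟩
    have hs := Finset.card_filter_add_card_filter_not (s := I s) (cval s · ≤ m)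
    have ht := Finset.card_filter_add_card_filter_not (s := I t) (cval s · ≤ m)
    have := Finset.card_le_card hlate
    omega

end IsGrassmannNecklace

/-- for a Grassmann necklace `I` of `k`-subsets, with
`M = { H : H.card = k ∧ H ≥_t I_t for all t }`, each `I_t` is a member of `M` and is
its unique `≤_t`-minimal element. -/
theorem necklace_entries_minimal_bases (n k : ℕ) [NeZero n]
    (I : Fin n → Finset (Fin n)) (hI : IsGrassmannNecklace I)
    (hcard : ∀ i : Fin n, (I i).card = k) :
    ∀ t : Fin n,
      ((I t).card = k ∧ ∀ s : Fin n, galeLE s (I s) (I t)) ∧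
      (∀ H : Finset (Fin n),
        (H.card = k ∧ ∀ s : Fin n, galeLE s (I s) H) → galeLE t (I t) H) ∧
      (∀ H : Finset (Fin n),
        (H.card = k ∧ ∀ s : Fin n, galeLE s (I s) H) →
        (∀ H' : Finset (Fin n),
          (H'.card = k ∧ ∀ s : Fin n, galeLE s (I s) H') → galeLE t H H') →
        H = I t) := by
  have hmem : ∀ t, (I t).card = k ∧ ∀ s, galeLE s (I s) (I t) :=
    fun t => ⟨hcard t, fun s => hI.galeLE_of_card_eq ((hcard s).trans (hcard t).symm)⟩
  intro t
  refine ⟨hmem t, fun H hH => hH.2 t, fun H hH hmin => ?_⟩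
  exact galeLEKey_antisymm (cval_injective t) (hmin (I t) (hmem t)) (hH.2 t)
end
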